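/- arXiv:math/0411077 — 2 statements merged into one kernel-verified Lean document; each statement's English description precedes it below -/
import Mathlib

section
/- Let G be a group, let n be a natural number, and let H₀, H₁, …, Hₙ be subgroups of G with H₀ = G, Hₙ = {1}, and Hᵢ ≤ H_{i-1} for 1 ≤ i ≤ n. Let a₁, …, aₙ ∈ G with aᵢ ∈ H_{i-1} for each i, suppose that for each i and every x ∈ H_{i-1} there exists an integer e with aᵢ^{-e} * x ∈ Hᵢ, and suppose moreover that for each i and each integer e, aᵢ^e ∈ Hᵢ implies e = 0 (each factor is infinite cyclic). Then the normal form is unique: if a₁^{e₁} * ⋯ * aₙ^{eₙ} = a₁^{f₁} * ⋯ * aₙ^{fₙ} for integers eᵢ, fᵢ, then eᵢ = fᵢ for all i. -/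
section
variable {G : Type*} [Group G] (n : ℕ) (H : ℕ → Subgroup G)
variable (a : ℕ → G)

lemma aux_mem (hchain : ∀ i, 1 ≤ i → i ≤ n → H i ≤ H (i - 1))
    (ha : ∀ i, 1 ≤ i → i ≤ n → a i ∈ H (i - 1)) :
    ∀ m k, k + m ≤ n → ∀ c : ℕ → ℤ,
      ((List.range m).map (fun i => a (i + k + 1) ^ c (i + k + 1))).prod ∈ H k := by
  intro m
  induction m with
  | zero => intro k _ c; simpa using Subgroup.one_mem (H k)
  | succ m ih =>
    intro k hk c
    rw [List.range_succ_eq_map, List.map_cons, List.map_map, List.prod_cons]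
    have h1 : a (0 + k + 1) ^ c (0 + k + 1) ∈ H k := by
      have := ha (k + 1) (by omega) (by omega)
      simp only [Nat.add_sub_cancel] at this
      simpa using Subgroup.zpow_mem _ this _
    have h2 : ((List.range m).map ((fun i => a (i + k + 1) ^ c (i + k + 1)) ∘ (· + 1))).prod
        ∈ H (k + 1) := by
      have hf : ((fun i => a (i + k + 1) ^ c (i + k + 1)) ∘ (· + 1))
          = fun i => a (i + (k + 1) + 1) ^ c (i + (k + 1) + 1) := by
        funext i; simp only [Function.comp]; congr 2 <;> omega
      rw [hf]
      exact ih (k + 1) (by omega) c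
    have h2' : _ ∈ H k := hchain (k + 1) (by omega) (by omega) (by simpa using h2)
    exact Subgroup.mul_mem _ h1 (by simpa using h2')

lemma aux_uniq (hchain : ∀ i, 1 ≤ i → i ≤ n → H i ≤ H (i - 1))
    (ha : ∀ i, 1 ≤ i → i ≤ n → a i ∈ H (i - 1))
    (hfree : ∀ i, 1 ≤ i → i ≤ n → ∀ e : ℤ, (a i) ^ e ∈ H i → e = 0) :
    ∀ m k, k + m ≤ n → ∀ e f : ℕ → ℤ,
      ((List.range m).map (fun i => a (i + k + 1) ^ e (i + k + 1))).prod
        = ((List.range m).map (fun i => a (i + k + 1) ^ f (i + k + 1))).prod →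
      ∀ i, k + 1 ≤ i → i ≤ k + m → e i = f i := by
  intro m
  induction m with
  | zero => intro k _ e f _ i h1 h2; omega
  | succ m ih =>
    intro k hk e f heq i hi1 hi2
    rw [List.range_succ_eq_map, List.map_cons, List.map_map, List.prod_cons,
      List.map_cons, List.map_map, List.prod_cons] at heq
    have hf : ∀ c : ℕ → ℤ, ((fun i => a (i + k + 1) ^ c (i + k + 1)) ∘ (· + 1))
        = fun i => a (i + (k + 1) + 1) ^ c (i + (k + 1) + 1) := by
      intro c; funext i; simp only [Function.comp]; congr 2 <;> omega
    rw [hf e, hf f] at heq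
    set u := ((List.range m).map (fun i => a (i + (k + 1) + 1) ^ e (i + (k + 1) + 1))).prod with hu
    set v := ((List.range m).map (fun i => a (i + (k + 1) + 1) ^ f (i + (k + 1) + 1))).prod with hv
    have hum : u ∈ H (k + 1) := aux_mem n H a hchain ha m (k + 1) (by omega) e
    have hvm : v ∈ H (k + 1) := aux_mem n H a hchain ha m (k + 1) (by omega) f
    simp only [Nat.zero_add] at heq
    -- heq : a (k+1) ^ e (k+1) * u = a (k+1) ^ f (k+1) * v
    have key : a (k + 1) ^ (f (k + 1) - e (k + 1)) ∈ H (k + 1) := by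
      have h' : v = a (k + 1) ^ (-f (k + 1)) * (a (k + 1) ^ e (k + 1) * u) := by
        rw [heq]; group
      have h'' : a (k + 1) ^ (f (k + 1) - e (k + 1)) = u * v⁻¹ := by
        rw [h']; group
      rw [h'']; exact Subgroup.mul_mem _ hum (Subgroup.inv_mem _ hvm)
    have hef : e (k + 1) = f (k + 1) := by
      have := hfree (k + 1) (by omega) (by omega) _ key
      omega
    rcases Nat.lt_or_ge i (k + 2) with h | h
    · have : i = k + 1 := by omega
      rw [this]; exact hef
    · have huv : u = v := by
        rw [hef] at heq
        exact mul_left_cancel heq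
      exact ih (k + 1) (by omega) e f huv i (by omega) (by omega)

end

/-- Uniqueness of normal forms along a polycyclic series with infinite cyclic factors:
if `⊤ = H₀ ≥ H₁ ≥ ⋯ ≥ Hₙ = ⊥` is a chain of subgroups with `aᵢ ∈ H_{i-1}`, every element
of `H_{i-1}` lies in a coset of a power of `aᵢ` modulo `Hᵢ`, and `aᵢ^e ∈ Hᵢ` forces
`e = 0`, then `a₁^{e₁} * ⋯ * aₙ^{eₙ} = a₁^{f₁} * ⋯ * aₙ^{fₙ}` implies `eᵢ = fᵢ`
for all `i`. -/
theorem polycyclic_normal_form_unique {G : Type*} [Group G] (n : ℕ)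
    (H : ℕ → Subgroup G) (h0 : H 0 = ⊤) (hn : H n = ⊥)
    (hchain : ∀ i, 1 ≤ i → i ≤ n → H i ≤ H (i - 1))
    (a : ℕ → G) (ha : ∀ i, 1 ≤ i → i ≤ n → a i ∈ H (i - 1))
    (hcov : ∀ i, 1 ≤ i → i ≤ n → ∀ x ∈ H (i - 1), ∃ e : ℤ, (a i) ^ (-e) * x ∈ H i)
    (hfree : ∀ i, 1 ≤ i → i ≤ n → ∀ e : ℤ, (a i) ^ e ∈ H i → e = 0)
    (e f : ℕ → ℤ)
    (heq : ((List.range n).map (fun i => a (i + 1) ^ e (i + 1))).prod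
         = ((List.range n).map (fun i => a (i + 1) ^ f (i + 1))).prod) :
    ∀ i, 1 ≤ i → i ≤ n → e i = f i := by
  intro i h1 h2
  refine aux_uniq n H a hchain ha hfree n 0 (by omega) e f ?_ i (by omega) (by omega)
  simpa using heq
end

section
/- Let G be a group, let s : ι → G and t : κ → G be families of elements of G. Suppose a ∈ G is given as an ordered product a = s_{i₁}^{e₁} * ⋯ * s_{i_l}^{e_l} and b ∈ G is given as an ordered product b = t_{k₁}^{f₁} * ⋯ * t_{k_h}^{f_h}, with integer exponents. Then Bob's computed value equals Alice's computed value: ((t_{k₁}^a)^{f₁} * ⋯ * (t_{k_h}^a)^{f_h})⁻¹ * b = a⁻¹ * (s_{i₁}^b)^{e₁} * ⋯ * (s_{i_l}^b)^{e_l}, and both are equal to the commutator [a,b]. (Correctness of the Arithmetica key exchange: Alice and Bob obtain the same shared secret [a,b] from the published conjugates and their respective secret words.) -/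
/-- The conjugate `x^y = y⁻¹ * x * y`. -/
def gconj {G : Type*} [Group G] (x y : G) : G := y⁻¹ * x * y

/-- The commutator `[x,y] = x⁻¹ * y⁻¹ * x * y`. -/
def gcomm {G : Type*} [Group G] (x y : G) : G := x⁻¹ * y⁻¹ * x * y

private lemma gconj_prod {G : Type*} [Group G] {α : Type*} (f : α → G) (c : G)
    (L : List (α × ℤ)) :
    (L.map (fun p => gconj (f p.1) c ^ p.2)).prod
      = c⁻¹ * (L.map (fun p => f p.1 ^ p.2)).prod * c := by
  induction L with
  | nil => simp
  | cons p L ih =>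
      simp only [List.map_cons, List.prod_cons, ih]
      have : gconj (f p.1) c ^ p.2 = c⁻¹ * f p.1 ^ p.2 * c := by
        rw [gconj]; rw [show c⁻¹ * f p.1 * c = (MulAut.conj c⁻¹) (f p.1) by simp [MulAut.conj], ← map_zpow]; simp [MulAut.conj]
      rw [this]; group

/-- Correctness of the Arithmetica key exchange: with
`a = s_{i₁}^{e₁} * ⋯ * s_{i_l}^{e_l}` and `b = t_{k₁}^{f₁} * ⋯ * t_{k_h}^{f_h}`
(ordered products over lists `L`, `M` of index/exponent pairs), Bob's value
`((t_{k₁}^a)^{f₁} * ⋯ * (t_{k_h}^a)^{f_h})⁻¹ * b` equals Alice's value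
`a⁻¹ * (s_{i₁}^b)^{e₁} * ⋯ * (s_{i_l}^b)^{e_l}`, and both equal `[a,b]`. -/
theorem arithmetica_correct {G : Type*} [Group G] {ι κ : Type*}
    (s : ι → G) (t : κ → G) (a b : G)
    (L : List (ι × ℤ)) (M : List (κ × ℤ))
    (ha : a = (L.map (fun p => s p.1 ^ p.2)).prod)
    (hb : b = (M.map (fun p => t p.1 ^ p.2)).prod) :
    ((M.map (fun p => gconj (t p.1) a ^ p.2)).prod)⁻¹ * b
      = a⁻¹ * (L.map (fun p => gconj (s p.1) b ^ p.2)).prod ∧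
    ((M.map (fun p => gconj (t p.1) a ^ p.2)).prod)⁻¹ * b = gcomm a b ∧
    a⁻¹ * (L.map (fun p => gconj (s p.1) b ^ p.2)).prod = gcomm a b := by
  rw [gconj_prod, gconj_prod, ← ha, ← hb]
  refine ⟨?_, ?_, ?_⟩ <;> simp [gcomm, mul_assoc]
end
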